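/- Consider a triple of generators (v_{ij}, v_{jl}, v_{jq}) of kQ̄_n with i, l, q ≠ j and i ≠ l, q (so that S = {i,j,j} ∩ {j,l,q} = {j}). Then the quasi-Poisson property {{v_{ij},v_{jl},v_{jq}}} = {{v_{ij},v_{jl},v_{jq}}}_qP holds if and only if both of the following conditions are satisfied: ν^{(j)}_{il} [ β^{(j)}_{lq} + μ^{(j)}_{iq} + δ_{lq} α^{(l)}_{ij} ] = 0 and β^{(j)}_{lq} μ^{(j)}_{il} − β^{(j)}_{lq} μ^{(j)}_{iq} + μ^{(j)}_{iq} μ^{(j)}_{il} = 1/4. -/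

import Mathlib

open TensorProduct

namespace NCQP

variable (𝕜 : Type) [Field 𝕜] [CharZero 𝕜]

/-- A double bracket on a `𝕜`-algebra `A`: a bilinear map `A × A → A ⊗ A` satisfying
cyclic antisymmetry and the Leibniz rule in its second argument (for the outer bimodule
structure on `A ⊗ A`). -/
structure DoubleBracket (A : Type) [Ring A] [Algebra 𝕜 A] where
  br : A →ₗ[𝕜] A →ₗ[𝕜] A ⊗[𝕜] A
  cyclic : ∀ a b : A, br b a = - (TensorProduct.comm 𝕜 A A) (br a b)
  leibniz : ∀ a b c : A,
    br a (b * c) = br a b * ((1 : A) ⊗ₜ[𝕜] c) + ((b : A) ⊗ₜ[𝕜] (1 : A)) * br a c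

variable {𝕜}
variable {A : Type} [Ring A] [Algebra 𝕜 A]

/-- The permutation `τ_(132)` on `A ⊗ A ⊗ A`, sending `a ⊗ b ⊗ c` to `b ⊗ c ⊗ a`. -/
noncomputable def tau132 (𝕜 : Type) [Field 𝕜] (A : Type) [Ring A] [Algebra 𝕜 A] :
    (A ⊗[𝕜] (A ⊗[𝕜] A)) ≃ₗ[𝕜] (A ⊗[𝕜] (A ⊗[𝕜] A)) :=
  (TensorProduct.comm 𝕜 A (A ⊗[𝕜] A)).trans (TensorProduct.assoc 𝕜 A A A)

/-- The permutation `τ_(123)` on `A ⊗ A ⊗ A`, sending `a ⊗ b ⊗ c` to `c ⊗ a ⊗ b`. -/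
noncomputable def tau123 (𝕜 : Type) [Field 𝕜] (A : Type) [Ring A] [Algebra 𝕜 A] :
    (A ⊗[𝕜] (A ⊗[𝕜] A)) ≃ₗ[𝕜] (A ⊗[𝕜] (A ⊗[𝕜] A)) :=
  (tau132 𝕜 A).trans (tau132 𝕜 A)

/-- Extension of a linear map `φ : A → A ⊗ A` to `A ⊗ A → A ⊗ A ⊗ A` acting on the
left factor: `b ⊗ c ↦ φ(b) ⊗ c`. -/
noncomputable def extL (𝕜 : Type) [Field 𝕜] (A : Type) [Ring A] [Algebra 𝕜 A]
    (φ : A →ₗ[𝕜] A ⊗[𝕜] A) : A ⊗[𝕜] A →ₗ[𝕜] A ⊗[𝕜] (A ⊗[𝕜] A) :=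
  (TensorProduct.assoc 𝕜 A A A).toLinearMap.comp (LinearMap.rTensor A φ)

/-- The triple bracket `{{a,b,c}}` associated with a double bracket. -/
noncomputable def tripleBr (D : DoubleBracket 𝕜 A) (a b c : A) : A ⊗[𝕜] (A ⊗[𝕜] A) :=
  extL 𝕜 A (D.br a) (D.br b c) + tau123 𝕜 A (extL 𝕜 A (D.br b) (D.br c a))
    + tau132 𝕜 A (extL 𝕜 A (D.br c) (D.br a b))

/-- The quasi-Poisson trivector term `{{a,b,c}}_qP` associated with a family of
orthogonal idempotents `e`. -/
noncomputable def tripleQP {I : Type} [Fintype I] (e : I → A) (a b c : A) :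
    A ⊗[𝕜] (A ⊗[𝕜] A) :=
  (4 : 𝕜)⁻¹ • ∑ s : I,
    ( (c * e s * a) ⊗ₜ[𝕜] ((e s * b) ⊗ₜ[𝕜] (e s))
    - (c * e s * a) ⊗ₜ[𝕜] ((e s) ⊗ₜ[𝕜] (b * e s))
    - (c * e s) ⊗ₜ[𝕜] ((a * e s * b) ⊗ₜ[𝕜] (e s))
    + (c * e s) ⊗ₜ[𝕜] ((a * e s) ⊗ₜ[𝕜] (b * e s))
    - (e s * a) ⊗ₜ[𝕜] ((e s * b) ⊗ₜ[𝕜] (e s * c))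
    + (e s * a) ⊗ₜ[𝕜] ((e s) ⊗ₜ[𝕜] (b * e s * c))
    + (e s) ⊗ₜ[𝕜] ((a * e s * b) ⊗ₜ[𝕜] (e s * c))
    - (e s) ⊗ₜ[𝕜] ((a * e s) ⊗ₜ[𝕜] (b * e s * c)) )

variable (𝕜)

/-- Generators of the path algebra of the quiver `Q̄_n`: one idempotent `E i` per vertex
and one arrow `V i j : j → i` for each ordered pair of distinct vertices. -/
inductive QGen (n : ℕ) : Type
  | E : Fin n → QGen n
  | V : Fin n → Fin n → QGen n

/-- The defining relations of the path algebra of `Q̄_n`. -/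
inductive QRel (n : ℕ) : FreeAlgebra 𝕜 (QGen n) → FreeAlgebra 𝕜 (QGen n) → Prop
  | orth (i j : Fin n) :
      QRel n (FreeAlgebra.ι 𝕜 (QGen.E i) * FreeAlgebra.ι 𝕜 (QGen.E j))
        (if i = j then FreeAlgebra.ι 𝕜 (QGen.E i) else 0)
  | sum_one :
      QRel n (∑ i : Fin n, FreeAlgebra.ι 𝕜 (QGen.E i)) 1
  | supp (i j : Fin n) :
      QRel n (FreeAlgebra.ι 𝕜 (QGen.V i j))
        (FreeAlgebra.ι 𝕜 (QGen.E i) * FreeAlgebra.ι 𝕜 (QGen.V i j) *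
          FreeAlgebra.ι 𝕜 (QGen.E j))
  | diag (i : Fin n) :
      QRel n (FreeAlgebra.ι 𝕜 (QGen.V i i)) 0

/-- The path algebra `𝕜 Q̄_n` of the double of an ordering of the complete `n`-partite
graph on `n` vertices. -/
abbrev PathAlg (n : ℕ) : Type := RingQuot (QRel 𝕜 n)

/-- The vertex idempotents `e i` of `𝕜 Q̄_n`. -/
noncomputable def pe (n : ℕ) (i : Fin n) : PathAlg 𝕜 n :=
  RingQuot.mkAlgHom 𝕜 (QRel 𝕜 n) (FreeAlgebra.ι 𝕜 (QGen.E i))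

/-- The arrows `v i j : j → i` of `𝕜 Q̄_n`. -/
noncomputable def pv (n : ℕ) (i j : Fin n) : PathAlg 𝕜 n :=
  RingQuot.mkAlgHom 𝕜 (QRel 𝕜 n) (FreeAlgebra.ι 𝕜 (QGen.V i j))

/-- The data of coefficient matrices `α, β, μ, ν` and scalars `κ`, together with a
`B`-linear double bracket on the path algebra `𝕜 Q̄_n` whose values on the generators
are given by the formulas (vv0)–(vvopp); `α s i j` stands for `α^{(s)}_{ij}` and
`κ i a j` stands for `κ_a^{(i,j)}`. -/
structure BracketData (n : ℕ) where
  α : Fin n → Fin n → Fin n → 𝕜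
  β : Fin n → Fin n → Fin n → 𝕜
  μ : Fin n → Fin n → Fin n → 𝕜
  ν : Fin n → Fin n → Fin n → 𝕜
  κ : Fin n → Fin n → Fin n → 𝕜
  D : DoubleBracket 𝕜 (PathAlg 𝕜 n)
  hα_skew : ∀ s i j, α s i j = - α s j i
  hα_row : ∀ s j, α s s j = 0
  hα_col : ∀ s j, α s j s = 0
  hβ_skew : ∀ s i j, β s i j = - β s j i
  hβ_row : ∀ s j, β s s j = 0
  hβ_col : ∀ s j, β s j s = 0
  hμ_diag : ∀ s i, μ s i i = 0
  hμ_row : ∀ s j, μ s s j = 0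
  hμ_col : ∀ s j, μ s j s = 0
  hν_diag : ∀ s i, ν s i i = 0
  hν_row : ∀ s j, ν s s j = 0
  hν_col : ∀ s j, ν s j s = 0
  hκ : ∀ i a j, ¬ (j < a ∧ a < i) → κ i a j = 0
  /-- the bracket vanishes on the idempotents, i.e. it is `B`-linear -/
  hB : ∀ s, D.br (pe 𝕜 n s) = 0
  hvv : ∀ i j, D.br (pv 𝕜 n i j) (pv 𝕜 n i j) = 0
  hdisj : ∀ i j p q, i ≠ p → i ≠ q → j ≠ p → j ≠ q →
    D.br (pv 𝕜 n i j) (pv 𝕜 n p q) = 0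
  hbr_α : ∀ i j l, i ≠ j → l ≠ j →
    D.br (pv 𝕜 n i j) (pv 𝕜 n l j) = α j i l • (pv 𝕜 n l j ⊗ₜ[𝕜] pv 𝕜 n i j)
  hbr_β : ∀ i j l, j ≠ i → l ≠ i →
    D.br (pv 𝕜 n i j) (pv 𝕜 n i l) = β i j l • (pv 𝕜 n i j ⊗ₜ[𝕜] pv 𝕜 n i l)
  hbr_μν : ∀ i j l, i ≠ j → l ≠ j → i ≠ l →
    D.br (pv 𝕜 n i j) (pv 𝕜 n j l) =
      μ j i l • (pe 𝕜 n j ⊗ₜ[𝕜] (pv 𝕜 n i j * pv 𝕜 n j l))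
      + ν j i l • (pe 𝕜 n j ⊗ₜ[𝕜] pv 𝕜 n i l)
  hbr_μν' : ∀ i j l, i ≠ j → l ≠ i → l ≠ j →
    D.br (pv 𝕜 n i j) (pv 𝕜 n l i) =
      - (μ i l j • ((pv 𝕜 n l i * pv 𝕜 n i j) ⊗ₜ[𝕜] pe 𝕜 n i))
      - ν i l j • (pv 𝕜 n l j ⊗ₜ[𝕜] pe 𝕜 n i)
  hbr_loop : ∀ i j, i ≠ j →
    D.br (pv 𝕜 n i j) (pv 𝕜 n j i) =
      (if j < i then (1 : 𝕜) else -1) •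
        ( pe 𝕜 n j ⊗ₜ[𝕜] pe 𝕜 n i
          + (2 : 𝕜)⁻¹ • ((pv 𝕜 n j i * pv 𝕜 n i j) ⊗ₜ[𝕜] pe 𝕜 n i)
          + (2 : 𝕜)⁻¹ • (pe 𝕜 n j ⊗ₜ[𝕜] (pv 𝕜 n i j * pv 𝕜 n j i)) )
      + ∑ a : Fin n, κ i a j • (pe 𝕜 n j ⊗ₜ[𝕜] (pv 𝕜 n i a * pv 𝕜 n a i))
      - ∑ b : Fin n, κ j b i • ((pv 𝕜 n j b * pv 𝕜 n b j) ⊗ₜ[𝕜] pe 𝕜 n i)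



set_option linter.unusedSectionVars false
set_option maxHeartbeats 1600000
set_option synthInstance.maxHeartbeats 1000000

section Aux

variable {𝕜} {n : ℕ}

/-! ### Path algebra multiplication lemmas -/

lemma pe_mul_pe (i j : Fin n) :
    pe 𝕜 n i * pe 𝕜 n j = if i = j then pe 𝕜 n i else 0 := by
  have := RingQuot.mkAlgHom_rel 𝕜 (QRel.orth (𝕜 := 𝕜) i j)
  rw [map_mul] at this
  simp only [pe]
  rw [this]
  split <;> simp

lemma pv_supp (i j : Fin n) :
    pv 𝕜 n i j = pe 𝕜 n i * pv 𝕜 n i j * pe 𝕜 n j := by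
  have := RingQuot.mkAlgHom_rel 𝕜 (QRel.supp (𝕜 := 𝕜) i j)
  rw [map_mul, map_mul] at this
  simp only [pe, pv]
  exact this

lemma pe_mul_pv (s i j : Fin n) :
    pe 𝕜 n s * pv 𝕜 n i j = if s = i then pv 𝕜 n i j else 0 := by
  conv_lhs => rw [pv_supp, ← mul_assoc, ← mul_assoc, pe_mul_pe]
  split <;> rename_i h
  · subst h; rw [← pv_supp]
  · simp

lemma pv_mul_pe (i j s : Fin n) :
    pv 𝕜 n i j * pe 𝕜 n s = if j = s then pv 𝕜 n i j else 0 := by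
  conv_lhs => rw [pv_supp, mul_assoc, pe_mul_pe]
  split <;> rename_i h
  · rw [h, ← pv_supp]
  · simp

lemma pv_mul_pv_zero (i j k l : Fin n) (h : j ≠ k) :
    pv 𝕜 n i j * pv 𝕜 n k l = 0 := by
  conv_lhs => rw [pv_supp i j, pv_supp k l]
  rw [mul_assoc (pe 𝕜 n i * pv 𝕜 n i j), ← mul_assoc (pe 𝕜 n j), ← mul_assoc (pe 𝕜 n j),
    pe_mul_pe, if_neg h]
  simp

lemma pe_mul_pv_same (s j : Fin n) : pe 𝕜 n s * pv 𝕜 n s j = pv 𝕜 n s j := by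
  rw [pe_mul_pv, if_pos rfl]

lemma pv_mul_pe_same (i s : Fin n) : pv 𝕜 n i s * pe 𝕜 n s = pv 𝕜 n i s := by
  rw [pv_mul_pe, if_pos rfl]

/-! ### A matrix representation of the path algebra -/

abbrev MatP (𝕜 : Type) [Field 𝕜] (n : ℕ) :=
  Matrix (Fin n) (Fin n) (MvPolynomial (Fin n × Fin n) 𝕜)

noncomputable def repGen (𝕜 : Type) [Field 𝕜] (n : ℕ) : QGen n → MatP 𝕜 n
  | QGen.E i => Matrix.single i i 1
  | QGen.V i j => if i = j then 0 else Matrix.single i j (MvPolynomial.X (i, j))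

lemma sum_stdBasis_one (𝕜 : Type) [Field 𝕜] (n : ℕ) :
    (∑ i : Fin n, Matrix.single i i (1 : MvPolynomial (Fin n × Fin n) 𝕜)) = 1 := by
  ext a b
  rw [Matrix.sum_apply, Finset.sum_eq_single a]
  · by_cases h : a = b <;> simp [Matrix.one_apply, h]
  · intro i _ hi
    exact Matrix.single_apply_of_row_ne hi _ _ _
  · simp

noncomputable def rep (𝕜 : Type) [Field 𝕜] (n : ℕ) : PathAlg 𝕜 n →ₐ[𝕜] MatP 𝕜 n :=
  RingQuot.liftAlgHom 𝕜 ⟨FreeAlgebra.lift 𝕜 (repGen 𝕜 n), by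
    intro x y h
    induction h with
    | orth i j =>
        by_cases h : i = j
        · subst h
          rw [if_pos rfl]
          simp only [map_mul, FreeAlgebra.lift_ι_apply, repGen]
          rw [Matrix.single_mul_single_same, one_mul]
        · rw [if_neg h]
          simp only [map_mul, FreeAlgebra.lift_ι_apply, repGen, map_zero]
          exact Matrix.single_mul_single_of_ne (h := h) ..
    | sum_one =>
        simp only [map_sum, FreeAlgebra.lift_ι_apply, repGen, map_one]
        exact sum_stdBasis_one 𝕜 n
    | supp i j =>
        simp only [map_mul, FreeAlgebra.lift_ι_apply, repGen]
        by_cases h : i = j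
        · simp [h]
        · rw [if_neg h, Matrix.single_mul_single_same, Matrix.single_mul_single_same,
            one_mul, mul_one]
    | diag i =>
        simp [FreeAlgebra.lift_ι_apply, repGen]⟩

lemma rep_pe (i : Fin n) :
    rep 𝕜 n (pe 𝕜 n i) = Matrix.single i i 1 := by
  simp [rep, pe, RingQuot.liftAlgHom_mkAlgHom_apply, FreeAlgebra.lift_ι_apply, repGen]

lemma rep_pv {i j : Fin n} (h : i ≠ j) :
    rep 𝕜 n (pv 𝕜 n i j) = Matrix.single i j (MvPolynomial.X (i, j)) := by
  simp [rep, pv, RingQuot.liftAlgHom_mkAlgHom_apply, FreeAlgebra.lift_ι_apply, repGen, h]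

/-- Coefficient functional: entry `(r, c)`, coefficient of the monomial `m`. -/
noncomputable def phiF (𝕜 : Type) [Field 𝕜] [CharZero 𝕜] (n : ℕ) (r c : Fin n)
    (m : (Fin n × Fin n) →₀ ℕ) : PathAlg 𝕜 n →ₗ[𝕜] 𝕜 where
  toFun x := MvPolynomial.coeff m ((rep 𝕜 n x) r c)
  map_add' x y := by simp [Matrix.add_apply]
  map_smul' a x := by simp [Matrix.smul_apply]

lemma phiF_apply (r c : Fin n) (m : (Fin n × Fin n) →₀ ℕ) (x : PathAlg 𝕜 n) :
    phiF 𝕜 n r c m x = MvPolynomial.coeff m ((rep 𝕜 n x) r c) := rfl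

/-- Triple functional on `A ⊗ (A ⊗ A)`. -/
noncomputable def Phi3 (f g h : A →ₗ[𝕜] 𝕜) : A ⊗[𝕜] (A ⊗[𝕜] A) →ₗ[𝕜] 𝕜 :=
  (TensorProduct.lid 𝕜 𝕜).toLinearMap.comp
    (TensorProduct.map f ((TensorProduct.lid 𝕜 𝕜).toLinearMap.comp (TensorProduct.map g h)))

lemma Phi3_tmul (f g h : A →ₗ[𝕜] 𝕜) (a b c : A) :
    Phi3 f g h (a ⊗ₜ[𝕜] (b ⊗ₜ[𝕜] c)) = f a * (g b * h c) := by
  simp [Phi3, smul_eq_mul]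

/-! ### Linear independence of the relevant tensors -/

lemma indep {i j l q : Fin n} (hij : i ≠ j) (hlj : l ≠ j) (hqj : q ≠ j)
    (hil : i ≠ l) (C1 C2 d : 𝕜)
    (h : C1 • (pe 𝕜 n j ⊗ₜ[𝕜] ((pv 𝕜 n i j * pv 𝕜 n j l) ⊗ₜ[𝕜] pv 𝕜 n j q))
        + C2 • (pe 𝕜 n j ⊗ₜ[𝕜] (pv 𝕜 n i l ⊗ₜ[𝕜] pv 𝕜 n j q))
        = d • (pe 𝕜 n j ⊗ₜ[𝕜] ((pv 𝕜 n i j * pv 𝕜 n j l) ⊗ₜ[𝕜] pv 𝕜 n j q))) :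
    C1 = d ∧ C2 = 0 := by
  set m1 : (Fin n × Fin n) →₀ ℕ :=
    Finsupp.single (i, j) 1 + Finsupp.single (j, l) 1 with hm1
  set m2 : (Fin n × Fin n) →₀ ℕ := Finsupp.single (i, l) 1 with hm2
  have hmm : m1 ≠ m2 := by
    intro hc
    have h2 := DFunLike.congr_fun hc (i, j)
    rw [hm1, hm2] at h2
    simp [Finsupp.single_apply, Prod.ext_iff, Ne.symm hij, hlj] at h2
  have hrepmul : rep 𝕜 n (pv 𝕜 n i j * pv 𝕜 n j l)
      = Matrix.single i l
          (MvPolynomial.X ((i : Fin n), j) * MvPolynomial.X (j, l)) := by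
    rw [map_mul, rep_pv hij, rep_pv (Ne.symm hlj), Matrix.single_mul_single_same]
  have hXX : (MvPolynomial.X ((i : Fin n), j) * MvPolynomial.X (j, l) :
      MvPolynomial (Fin n × Fin n) 𝕜) = MvPolynomial.monomial m1 1 := by
    rw [hm1, MvPolynomial.X, MvPolynomial.X, MvPolynomial.monomial_mul, one_mul]
  have hA : phiF 𝕜 n j j 0 (pe 𝕜 n j) = 1 := by
    rw [phiF_apply, rep_pe]
    simp
  have hB1P : phiF 𝕜 n i l m1 (pv 𝕜 n i j * pv 𝕜 n j l) = 1 := by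
    rw [phiF_apply, hrepmul]
    simp only [Matrix.single_apply_same]
    rw [hXX, MvPolynomial.coeff_monomial, if_pos rfl]
  have hB1V : phiF 𝕜 n i l m1 (pv 𝕜 n i l) = 0 := by
    rw [phiF_apply, rep_pv hil]
    simp only [Matrix.single_apply_same]
    rw [MvPolynomial.X, MvPolynomial.coeff_monomial, if_neg (fun hc => hmm (by rw [hm2, hc]))]
  have hB2P : phiF 𝕜 n i l m2 (pv 𝕜 n i j * pv 𝕜 n j l) = 0 := by
    rw [phiF_apply, hrepmul]
    simp only [Matrix.single_apply_same]
    rw [hXX, MvPolynomial.coeff_monomial, if_neg hmm]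
  have hB2V : phiF 𝕜 n i l m2 (pv 𝕜 n i l) = 1 := by
    rw [phiF_apply, rep_pv hil]
    simp only [Matrix.single_apply_same]
    rw [MvPolynomial.X, hm2, MvPolynomial.coeff_monomial, if_pos rfl]
  have hC : phiF 𝕜 n j q (Finsupp.single ((j : Fin n), q) 1) (pv 𝕜 n j q) = 1 := by
    rw [phiF_apply, rep_pv (Ne.symm hqj)]
    simp only [Matrix.single_apply_same]
    rw [MvPolynomial.X, MvPolynomial.coeff_monomial, if_pos rfl]
  constructor
  · have := congrArg (Phi3 (phiF 𝕜 n j j 0) (phiF 𝕜 n i l m1)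
      (phiF 𝕜 n j q (Finsupp.single (j, q) 1))) h
    simpa [map_add, map_smul, Phi3_tmul, hA, hB1P, hB1V, hC, smul_eq_mul] using this
  · have := congrArg (Phi3 (phiF 𝕜 n j j 0) (phiF 𝕜 n i l m2)
      (phiF 𝕜 n j q (Finsupp.single (j, q) 1))) h
    simpa [map_add, map_smul, Phi3_tmul, hA, hB2P, hB2V, hC, smul_eq_mul] using this

/-! ### Structural lemmas for the triple bracket -/

lemma extL_tmul (φ : A →ₗ[𝕜] A ⊗[𝕜] A) (x y : A) :
    extL 𝕜 A φ (x ⊗ₜ[𝕜] y) = (TensorProduct.assoc 𝕜 A A A) (φ x ⊗ₜ[𝕜] y) := by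
  simp [extL]

lemma tau132_tmul (a b c : A) :
    tau132 𝕜 A (a ⊗ₜ[𝕜] (b ⊗ₜ[𝕜] c)) = b ⊗ₜ[𝕜] (c ⊗ₜ[𝕜] a) := by
  simp [tau132]

lemma tau123_tmul (a b c : A) :
    tau123 𝕜 A (a ⊗ₜ[𝕜] (b ⊗ₜ[𝕜] c)) = c ⊗ₜ[𝕜] (a ⊗ₜ[𝕜] b) := by
  simp [tau123, tau132_tmul]

lemma br_pe_right (D : DoubleBracket 𝕜 A) {e : A} (he : D.br e = 0) (x : A) :
    D.br x e = 0 := by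
  rw [D.cyclic, he]
  simp

section Main

variable (S : BracketData 𝕜 n) (i j l q : Fin n)

/-- The bracket `{{v_jl, v_ij * v_jq}}` via the Leibniz rule. -/
lemma br_jl_prod (hij : i ≠ j) (hlj : l ≠ j) (hqj : q ≠ j) (hil : i ≠ l) :
    S.D.br (pv 𝕜 n j l) (pv 𝕜 n i j * pv 𝕜 n j q)
      = - (S.μ j i l • ((pv 𝕜 n i j * pv 𝕜 n j l) ⊗ₜ[𝕜] pv 𝕜 n j q))
        - S.ν j i l • (pv 𝕜 n i l ⊗ₜ[𝕜] pv 𝕜 n j q)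
        + S.β j l q • ((pv 𝕜 n i j * pv 𝕜 n j l) ⊗ₜ[𝕜] pv 𝕜 n j q) := by
  rw [S.D.leibniz (pv 𝕜 n j l) (pv 𝕜 n i j) (pv 𝕜 n j q),
    S.hbr_μν' j l i (Ne.symm hlj) hij hil,
    S.hbr_β j l q hlj hqj]
  simp only [sub_mul, neg_mul, smul_mul_assoc, mul_smul_comm,
    Algebra.TensorProduct.tmul_mul_tmul, one_mul, mul_one, pe_mul_pv_same]

lemma br_jl_iq (hij : i ≠ j) (hlj : l ≠ j) (hqj : q ≠ j) (hil : i ≠ l) :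
    S.D.br (pv 𝕜 n j l) (pv 𝕜 n i q)
      = (if l = q then S.α l j i else 0) • (pv 𝕜 n i q ⊗ₜ[𝕜] pv 𝕜 n j l) := by
  by_cases hlq : l = q
  · subst hlq
    rw [if_pos rfl]
    exact S.hbr_α j l i (Ne.symm hlj) hil
  · rw [if_neg hlq, zero_smul]
    exact S.hdisj j l i q (Ne.symm hij) (Ne.symm hqj) (Ne.symm hil) hlq

/-- Main computation of the triple bracket. -/
lemma main_comp (hij : i ≠ j) (hlj : l ≠ j) (hqj : q ≠ j) (hil : i ≠ l) (hiq : i ≠ q) :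
    tripleBr S.D (pv 𝕜 n i j) (pv 𝕜 n j l) (pv 𝕜 n j q)
      = (S.β j l q * S.μ j i l - S.β j l q * S.μ j i q + S.μ j i q * S.μ j i l) •
          (pe 𝕜 n j ⊗ₜ[𝕜] ((pv 𝕜 n i j * pv 𝕜 n j l) ⊗ₜ[𝕜] pv 𝕜 n j q))
        + (S.ν j i l * (S.β j l q + S.μ j i q
              + (if l = q then (1 : 𝕜) else 0) * S.α l i j)) •
          (pe 𝕜 n j ⊗ₜ[𝕜] (pv 𝕜 n i l ⊗ₜ[𝕜] pv 𝕜 n j q)) := by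
  have hβ : S.D.br (pv 𝕜 n j l) (pv 𝕜 n j q)
      = S.β j l q • (pv 𝕜 n j l ⊗ₜ[𝕜] pv 𝕜 n j q) := S.hbr_β j l q hlj hqj
  have hca : S.D.br (pv 𝕜 n j q) (pv 𝕜 n i j)
      = - (S.μ j i q • ((pv 𝕜 n i j * pv 𝕜 n j q) ⊗ₜ[𝕜] pe 𝕜 n j))
        - S.ν j i q • (pv 𝕜 n i q ⊗ₜ[𝕜] pe 𝕜 n j) :=
    S.hbr_μν' j q i (Ne.symm hqj) hij hiq
  have hab : S.D.br (pv 𝕜 n i j) (pv 𝕜 n j l)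
      = S.μ j i l • (pe 𝕜 n j ⊗ₜ[𝕜] (pv 𝕜 n i j * pv 𝕜 n j l))
        + S.ν j i l • (pe 𝕜 n j ⊗ₜ[𝕜] pv 𝕜 n i l) := S.hbr_μν i j l hij hlj hil
  have hpe : S.D.br (pv 𝕜 n j q) (pe 𝕜 n j) = 0 := br_pe_right S.D (S.hB j) _
  rw [tripleBr, hβ, hca, hab]
  simp only [map_smul, map_add, map_sub, map_neg]
  simp only [extL_tmul]
  rw [hab, br_jl_prod S i j l q hij hlj hqj hil, br_jl_iq S i j l q hij hlj hqj hil, hpe]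
  simp only [TensorProduct.add_tmul, TensorProduct.sub_tmul, TensorProduct.neg_tmul,
    ← TensorProduct.smul_tmul', TensorProduct.zero_tmul, map_add, map_sub, map_neg,
    map_smul, map_zero, TensorProduct.assoc_tmul, tau123_tmul, tau132_tmul, smul_zero,
    add_zero, neg_zero, sub_zero]
  by_cases hlq : l = q
  · subst hlq
    rw [if_pos rfl, if_pos rfl, S.hα_skew l j i]
    module
  · rw [if_neg hlq, if_neg hlq]
    module

/-- Computation of the quasi-Poisson trivector. -/
lemma qp_comp (hij : i ≠ j) (hlj : l ≠ j) (hqj : q ≠ j) (hil : i ≠ l) (hiq : i ≠ q) :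
    tripleQP (pe 𝕜 n) (pv 𝕜 n i j) (pv 𝕜 n j l) (pv 𝕜 n j q)
      = (4 : 𝕜)⁻¹ • (pe 𝕜 n j ⊗ₜ[𝕜] ((pv 𝕜 n i j * pv 𝕜 n j l) ⊗ₜ[𝕜] pv 𝕜 n j q)) := by
  rw [tripleQP]
  congr 1
  rw [Finset.sum_eq_single j]
  · simp [pv_mul_pe, pe_mul_pv, hqj, hlj, Ne.symm hij,
      pv_mul_pv_zero j q i j (Ne.symm hiq), pv_mul_pv_zero j l j q hlj]
  · intro s _ hs
    simp [pv_mul_pe, pe_mul_pv, hs, Ne.symm hs,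
      pv_mul_pv_zero j q i j (Ne.symm hiq), pv_mul_pv_zero j l j q hlj]
  · simp

end Main

end Aux

/-- Case 2.3, Lemma 5.5. For a triple `(v_{ij}, v_{jl}, v_{jq})` with
`S = {j}`, the quasi-Poisson property holds iff the two stated conditions hold. -/
theorem statement_12 {𝕜 : Type} [Field 𝕜] [CharZero 𝕜] {n : ℕ}
    (S : BracketData 𝕜 n) (i j l q : Fin n)
    (hij : i ≠ j) (hlj : l ≠ j) (hqj : q ≠ j) (hil : i ≠ l) (hiq : i ≠ q) :
    tripleBr S.D (pv 𝕜 n i j) (pv 𝕜 n j l) (pv 𝕜 n j q)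
        = tripleQP (pe 𝕜 n) (pv 𝕜 n i j) (pv 𝕜 n j l) (pv 𝕜 n j q)
      ↔ (S.ν j i l * (S.β j l q + S.μ j i q + (if l = q then (1 : 𝕜) else 0) * S.α l i j)
            = 0)
        ∧ (S.β j l q * S.μ j i l - S.β j l q * S.μ j i q + S.μ j i q * S.μ j i l
            = (4 : 𝕜)⁻¹) := by
  rw [main_comp S i j l q hij hlj hqj hil hiq, qp_comp i j l q hij hlj hqj hil hiq]
  constructor
  · intro h
    obtain ⟨h1, h2⟩ := indep hij hlj hqj hil _ _ _ h
    exact ⟨h2, h1⟩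
  · rintro ⟨h1, h2⟩
    rw [h1, h2, zero_smul, add_zero]

end NCQP
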